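/- arXiv:2104.13910 — 4 statements merged into one kernel-verified Lean document; each statement's English description precedes it below -/
import Mathlib

section
/- If X ⊆ ℕ is infinite and the complement of X is hyperimmune, then there is a 1-generic set A with A ⊆ X; consequently A ∪ X = X. -/
open Classical in
/-- Characteristic sequence of a set of naturals. -/
noncomputable def chi (G : Set ℕ) : ℕ → Bool := fun n => decide (n ∈ G)

/-- Initial segment of length `k` of the characteristic sequence of `G`. -/
noncomputable def seg (G : Set ℕ) (k : ℕ) : List Bool := (List.range k).map (chi G)

/-- `G` is 1-generic: for every c.e. set `W` of binary strings, some initial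
segment of `G` lies in `W` or has no extension in `W`. -/
def OneGeneric (G : Set ℕ) : Prop :=
  ∀ W : Set (List Bool), REPred (· ∈ W) →
    ∃ k, seg G k ∈ W ∨ ∀ τ : List Bool, seg G k <+: τ → τ ∉ W

/-- A set of strings is dense if every string has an extension in it. -/
def DenseStrings (W : Set (List Bool)) : Prop := ∀ σ : List Bool, ∃ τ ∈ W, σ <+: τ

/-- `G` is weak-1-generic: `G` meets every dense c.e. set of strings. -/
def WeakOneGeneric (G : Set ℕ) : Prop :=
  ∀ W : Set (List Bool), REPred (· ∈ W) → DenseStrings W → ∃ k, seg G k ∈ W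

/-- Principal function of `I` (increasing enumeration). -/
noncomputable def princ (I : Set ℕ) : ℕ → ℕ := Nat.nth (· ∈ I)

/-- `I` is hyperimmune: infinite and its principal function is majorized by
no computable function. -/
def Hyperimmune (I : Set ℕ) : Prop :=
  I.Infinite ∧ ∀ f : ℕ → ℕ, Computable f → ∃ n, f n < princ I n

/-- The `I`-subsequence `A_I` of `A`, as a set: `A_I(n) = A(P_I(n))`. -/
def subseq (A I : Set ℕ) : Set ℕ := {n | princ I n ∈ A}

/-- The `I`-subsequence of an infinite binary sequence. -/
noncomputable def subseqFun (X : ℕ → Bool) (I : Set ℕ) : ℕ → Bool :=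
  fun n => X (princ I n)

def ComputableSet (I : Set ℕ) : Prop := ComputablePred (· ∈ I)

/-- Partial functions recursive in an oracle `O`. -/
inductive RecursiveIn' (O : ℕ →. ℕ) : (ℕ →. ℕ) → Prop
  | zero : RecursiveIn' O (pure 0)
  | succ : RecursiveIn' O ↑Nat.succ
  | left : RecursiveIn' O ↑fun n : ℕ => n.unpair.1
  | right : RecursiveIn' O ↑fun n : ℕ => n.unpair.2
  | oracle : RecursiveIn' O O
  | pair {f g} : RecursiveIn' O f → RecursiveIn' O g →
      RecursiveIn' O fun n => Nat.pair <$> f n <*> g n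
  | comp {f g} : RecursiveIn' O f → RecursiveIn' O g →
      RecursiveIn' O fun n => g n >>= f
  | prec {f g} : RecursiveIn' O f → RecursiveIn' O g →
      RecursiveIn' O (Nat.unpaired fun a n =>
        n.rec (f a) fun y IH => do { let i ← IH; g (Nat.pair a (Nat.pair y i)) })
  | rfind {f} : RecursiveIn' O f →
      RecursiveIn' O fun a => Nat.rfind fun n => (fun m => m = 0) <$> f (Nat.pair a n)

open Classical in
noncomputable def charFun (A : Set ℕ) : ℕ →. ℕ :=
  fun n => Part.some (if n ∈ A then 1 else 0)

/-- `A` Turing-computes `B`. -/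
def TuringComputes (A B : Set ℕ) : Prop := RecursiveIn' (charFun A) (charFun B)

/-- The halting problem `∅′`. -/
def HaltingProblem : Set ℕ :=
  {n | ((Denumerable.ofNat Nat.Partrec.Code n).eval n).Dom}

/-- `I` is wild. -/
def Wild (I : Set ℕ) : Prop :=
  ¬ComputableSet I ∧ ∃ f : ℕ → ℕ, Computable f ∧ StrictMono f ∧
    (∀ n, (I ∩ Set.Ioo (f n) (f (n + 1))).Nonempty) ∧
    ¬Computable fun n => (I ∩ Set.Ioo (f n) (f (n + 1))).ncard

/-- `I` is tame. -/
def Tame (I : Set ℕ) : Prop :=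
  ¬ComputableSet I ∧ ∃ f : ℕ → ℕ, Computable f ∧ StrictMono f ∧
    (∀ n, (I ∩ Set.Ioo (f n) (f (n + 1))).Nonempty) ∧
    Computable fun n => (I ∩ Set.Ioo (f n) (f (n + 1))).ncard

/-- The string `ρ` meets `S`: some initial segment of `ρ` is in `S`. -/
def MeetsStr (ρ : List Bool) (S : Set (List Bool)) : Prop := ∃ σ ∈ S, σ <+: ρ

/-- The sequence `X` meets `S`: some initial segment of `X` is in `S`. -/
def MeetsSeq (X : ℕ → Bool) (S : Set (List Bool)) : Prop :=
  ∃ k, (List.range k).map X ∈ S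

/-- `l, t` are suitable for `S`. -/
def SuitableFor (S : Set (List Bool)) (l : ℕ → ℕ) (t : ℕ → List Bool) : Prop :=
  l 0 = 0 ∧ (∀ n, l (n + 1) = l n + (t n).length) ∧
    ∀ (X : ℕ → Bool) (n m : ℕ), m ≤ l n →
      MeetsStr ((List.range m).map X ++ t n) S

/-- The collection `D` has property `(*)`. -/
def HasStar (D : ℕ → Set (List Bool)) : Prop :=
  ∀ i, ∃ l t, SuitableFor (D i) l t ∧ ∀ n, ∃ j, D j =
    {s | ∃ (σ τ ρ : List Bool) (m : ℕ), m > n ∧ σ.length = l (2 * m) ∧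
      τ = t (2 * m) ∧ ρ = t (2 * m + 1) ∧ s = σ ++ τ ++ ρ}

/-- The `e`-th c.e. set of binary strings. -/
def ceSet (e : ℕ) : Set (List Bool) :=
  {σ | ((Denumerable.ofNat Nat.Partrec.Code e).eval (Encodable.encode σ)).Dom}

open Classical in
/-- The `I`-subsequence of a finite string. -/
noncomputable def subseqStr (τ : List Bool) (I : Set ℕ) : List Bool :=
  (List.range τ.length).filterMap fun k => if k ∈ I then τ[k]? else none

/-!
Take `H = Xᶜ` and build `A` by finite extensions through strings that are `false` on `H`. Above
such a string `σ`, the `e`-th c.e. set `W` is decided as follows: either some admissible extension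
of `σ` lies in `W`, or some `σ 0ⁿ` has no extension in `W`. Otherwise every `σ 0ⁿ` has an
extension in `W`, and a computable search finds these with lengths below a computable `g n`; none
is admissible, so each has a `1` at a position of `H` in `[n, g n)`. Iterating `g` then majorizes
the principal function of `H`, contradicting hyperimmunity.
-/

section Computability

open Nat.Partrec (Code)
open Encodable

theorem exists_eq_ceSet_of_rePred {W : Set (List Bool)} (hW : REPred (· ∈ W)) :
    ∃ e, W = ceSet e := by
  have hF : Partrec fun n : ℕ => (Part.ofOption (decode (α := List Bool) n)).bind
      fun σ => (Part.assert (σ ∈ W) fun _ => Part.some ()).map fun _ => (0 : ℕ) :=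
    Computable.decode.ofOption.bind
      ((hW.map ((Computable.const 0).comp Computable.fst).to₂).comp Computable.snd)
  obtain ⟨c, hc⟩ := Code.exists_code.1 (Partrec.nat_iff.1 hF)
  refine ⟨encode c, Set.ext fun σ => ?_⟩
  simp [ceSet, hc, encodek, Part.ofOption, Part.bind, Part.assert]

theorem rePred_mem_ceSet (e : ℕ) : REPred (· ∈ ceSet e) :=
  Partrec.dom_re (Code.eval_part.comp (Computable.const _) Computable.encode)

theorem REPred.exists_computable_length_bound {W : Set (List Bool)} (hW : REPred (· ∈ W))
    {f : ℕ → List Bool} (hf : Computable f) (hext : ∀ n, ∃ ρ ∈ W, f n <+: ρ) :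
    ∃ g : ℕ → ℕ, Computable g ∧ ∀ n, ∃ ρ ∈ W, f n <+: ρ ∧ ρ.length < g n := by
  obtain ⟨e, rfl⟩ := exists_eq_ceSet_of_rePred hW
  let c := Denumerable.ofNat Code e
  -- Stage `s` tries the extension coded by `s.unpair.2` for `s.unpair.1` steps.
  let attempt : ℕ → ℕ → Option (List Bool) := fun n s =>
    (decode (α := List Bool) s.unpair.2).bind fun γ =>
      (Code.evaln s.unpair.1 c (encode (f n ++ γ))).map fun _ => f n ++ γ
  have hattempt : Computable₂ attempt := by
    have hρ : Computable₂ fun (p : ℕ × ℕ) (γ : List Bool) => f p.1 ++ γ :=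
      (Computable.list_append.comp (hf.comp (Computable.fst.comp Computable.fst))
        Computable.snd).to₂
    have hrun : Computable₂ fun (p : ℕ × ℕ) (γ : List Bool) =>
        Code.evaln p.2.unpair.1 c (encode (f p.1 ++ γ)) :=
      (Code.primrec_evaln.to_comp.comp
        (((Computable.fst.comp (Computable.unpair.comp (Computable.snd.comp Computable.fst))).pair
          (Computable.const c)).pair (Computable.encode.comp hρ))).to₂
    exact Computable.option_bind
      (Computable.decode.comp (Computable.snd.comp (Computable.unpair.comp Computable.snd)))
      (Computable.option_map hrun
        (hρ.comp (Computable.fst.comp Computable.fst) (Computable.snd.comp Computable.fst)).to₂)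
  have hdom : ∀ n, (Nat.rfindOpt (attempt n)).Dom := by
    intro n
    obtain ⟨ρ, hρ, γ, rfl⟩ := hext n
    obtain ⟨x, hx⟩ := Part.dom_iff_mem.1 hρ
    obtain ⟨k, hk⟩ := Code.evaln_complete.1 hx
    refine Nat.rfindOpt_dom.2 ⟨Nat.pair k (encode γ), f n ++ γ, ?_⟩
    simpa [attempt, encodek] using ⟨x, hk⟩
  refine ⟨fun n => ((Nat.rfindOpt (attempt n)).get (hdom n)).length + 1,
    Computable.succ.comp (Computable.list_length.comp ?_), fun n => ?_⟩
  · exact (Partrec.rfindOpt hattempt).of_eq_tot fun n => Part.get_mem (hdom n)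
  · obtain ⟨s, hs⟩ := Nat.rfindOpt_spec (Part.get_mem (hdom n))
    simp only [attempt, Option.mem_def, Option.bind_eq_some_iff, Option.map_eq_some_iff] at hs
    obtain ⟨γ, -, x, hx, hρ⟩ := hs
    refine ⟨f n ++ γ, Part.dom_iff_mem.2 ⟨x, Code.evaln_sound hx⟩, List.prefix_append _ _, ?_⟩
    rw [hρ]
    exact Nat.lt_succ_self _

theorem Hyperimmune.exists_disjoint_Ico {H : Set ℕ} (hH : Hyperimmune H) {g : ℕ → ℕ}
    (hg : Computable g) : ∃ n, Disjoint H (Set.Ico n (g n)) := by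
  by_contra! hmeet
  simp only [Set.not_disjoint_iff, Set.mem_Ico] at hmeet
  -- `F k = g^[k + 1] 0`; each `[F k, F (k + 1))` contains an element of `H`.
  let F : ℕ → ℕ := fun k => Nat.rec (g 0) (fun _ ih => g ih) k
  have hF : Computable F :=
    Computable.nat_rec Computable.id (Computable.const (g 0))
      (hg.comp (Computable.snd.comp Computable.snd)).to₂
  have hlt : ∀ k, princ H k < F k := by
    intro k
    induction k with
    | zero =>
      obtain ⟨m, hm, -, hmg⟩ := hmeet 0
      exact (Nat.nth_zero (p := (· ∈ H)) ▸ Nat.sInf_le hm).trans_lt hmg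
    | succ k ih =>
      obtain ⟨m, hm, hFm, hmg⟩ := hmeet (F k)
      refine lt_of_le_of_lt ?_ hmg
      by_contra! hm'
      have := Nat.le_nth_of_lt_nth_succ hm' hm
      simp only [princ] at ih
      omega
  obtain ⟨n, hn⟩ := hH.2 F hF
  exact (hlt n).not_gt hn

end Computability

def FalseOn (H : Set ℕ) (σ : List Bool) : Prop :=
  ∀ m ∈ H, ∀ h : m < σ.length, σ[m] = false

theorem falseOn_nil (H : Set ℕ) : FalseOn H [] := fun _ _ h => absurd h (Nat.not_lt_zero _)

theorem FalseOn.append_replicate_false {H : Set ℕ} {σ : List Bool} (hσ : FalseOn H σ) (n : ℕ) :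
    FalseOn H (σ ++ List.replicate n false) := by
  intro m hm hlen
  rw [List.getElem_append]
  split_ifs with hl
  · exact hσ m hm hl
  · exact List.getElem_replicate ..

theorem FalseOn.exists_mem_Ico_of_prefix {H : Set ℕ} {σ ρ : List Bool} (hσ : FalseOn H σ)
    (hσρ : σ <+: ρ) (hρ : ¬FalseOn H ρ) : ∃ m ∈ H, m ∈ Set.Ico σ.length ρ.length := by
  simp only [FalseOn, not_forall, Bool.not_eq_false] at hρ
  obtain ⟨m, hm, hmρ, htrue⟩ := hρ
  refine ⟨m, hm, ?_, hmρ⟩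
  by_contra! hmσ
  have := hσρ.getElem hmσ ▸ hσ m hm hmσ
  simp [htrue] at this

theorem Hyperimmune.exists_falseOn_extension {H : Set ℕ} (hH : Hyperimmune H) {σ : List Bool}
    (hσ : FalseOn H σ) {W : Set (List Bool)} (hW : REPred (· ∈ W)) :
    ∃ τ, σ <+: τ ∧ FalseOn H τ ∧ (τ ∈ W ∨ ∀ ρ, τ <+: ρ → ρ ∉ W) := by
  by_cases hmeet : ∃ τ, σ <+: τ ∧ FalseOn H τ ∧ τ ∈ W
  · obtain ⟨τ, hστ, hτ, hτW⟩ := hmeet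
    exact ⟨τ, hστ, hτ, Or.inl hτW⟩
  by_cases hzeros : ∃ n, ∀ ρ, σ ++ List.replicate n false <+: ρ → ρ ∉ W
  · obtain ⟨n, hn⟩ := hzeros
    exact ⟨_, List.prefix_append _ _, hσ.append_replicate_false n, Or.inr hn⟩
  exfalso
  push Not at hzeros
  have hf : Computable fun n => σ ++ List.replicate n false :=
    (Primrec.list_append.comp (Primrec.const σ)
      (Primrec.list_map Primrec.list_range (Primrec.const false).to₂)).to_comp.of_eq
      fun n => by simp [List.map_const']
  obtain ⟨g, hg, hgW⟩ := hW.exists_computable_length_bound hf fun n =>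
    (hzeros n).imp fun ρ h => ⟨h.2, h.1⟩
  obtain ⟨n, hn⟩ := hH.exists_disjoint_Ico hg
  obtain ⟨ρ, hρW, hpre, hlen⟩ := hgW n
  have hρ : ¬FalseOn H ρ := fun hρ =>
    hmeet ⟨ρ, (List.prefix_append _ _).trans hpre, hρ, hρW⟩
  obtain ⟨m, hm, hmlo, hmhi⟩ := (hσ.append_replicate_false n).exists_mem_Ico_of_prefix hpre hρ
  simp only [List.length_append, List.length_replicate] at hmlo
  exact Set.disjoint_left.1 hn hm ⟨by omega, by omega⟩

theorem exists_prefix_chain {P : List Bool → Prop} {Q : ℕ → List Bool → Prop} (h₀ : P [])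
    (hstep : ∀ e σ, P σ → ∃ τ, σ <+: τ ∧ P τ ∧ Q e τ) :
    ∃ s : ℕ → List Bool, (∀ e, s e <+: s (e + 1)) ∧ (∀ e, P (s e)) ∧ ∀ e, Q e (s (e + 1)) := by
  choose next hnext using fun e (σ : Subtype P) =>
    have ⟨τ, hστ, hτ, hQ⟩ := hstep e σ.1 σ.2
    (⟨⟨τ, hτ⟩, hστ, hQ⟩ : ∃ τ : Subtype P, σ.1 <+: τ.1 ∧ Q e τ.1)
  let t : ℕ → Subtype P := fun e => Nat.rec ⟨[], h₀⟩ next e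
  exact ⟨fun e => (t e).1, fun e => (hnext e (t e)).1, fun e => (t e).2,
    fun e => (hnext e (t e)).2⟩

def limitSet (s : ℕ → List Bool) : Set ℕ :=
  {n | ∃ e, ∃ h : n < (s e).length, (s e)[n] = true}

theorem mem_limitSet_iff {s : ℕ → List Bool} (hs : ∀ e, s e <+: s (e + 1)) {n e : ℕ}
    (hn : n < (s e).length) : n ∈ limitSet s ↔ (s e)[n] = true := by
  have hmono := Nat.rel_of_forall_rel_succ_of_le List.IsPrefix hs
  refine ⟨fun ⟨e', hn', htrue⟩ => ?_, fun h => ⟨e, hn, h⟩⟩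
  rcases le_total e e' with he | he
  · rwa [(hmono he).getElem hn]
  · rwa [← (hmono he).getElem hn']

theorem seg_limitSet {s : ℕ → List Bool} (hs : ∀ e, s e <+: s (e + 1)) (e : ℕ) :
    seg (limitSet s) (s e).length = s e := by
  refine List.ext_getElem (by simp [seg]) fun n _ hn => ?_
  simp [seg, chi, mem_limitSet_iff hs hn]

theorem limitSet_subset_compl {s : ℕ → List Bool} {H : Set ℕ} (hs : ∀ e, FalseOn H (s e)) :
    limitSet s ⊆ Hᶜ := by
  rintro n ⟨e, hn, htrue⟩ hnH
  simp [hs e n hnH hn] at htrue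

theorem oneGeneric_subset_of_compl_hyperimmune_general (X : Set ℕ)
    (hc : Hyperimmune Xᶜ) : ∃ A : Set ℕ, OneGeneric A ∧ A ⊆ X ∧ A ∪ X = X := by
  obtain ⟨s, hchain, hfalse, hforce⟩ := exists_prefix_chain (falseOn_nil Xᶜ)
    fun e _ hσ => hc.exists_falseOn_extension hσ (rePred_mem_ceSet e)
  have hsub : limitSet s ⊆ X := compl_compl X ▸ limitSet_subset_compl hfalse
  refine ⟨limitSet s, fun W hW => ?_, hsub, Set.union_eq_self_of_subset_left hsub⟩
  obtain ⟨e, rfl⟩ := exists_eq_ceSet_of_rePred hW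
  refine ⟨(s (e + 1)).length, ?_⟩
  rw [seg_limitSet hchain]
  exact hforce e

theorem oneGeneric_subset_of_compl_hyperimmune (X : Set ℕ) (hX : X.Infinite)
    (hc : Hyperimmune Xᶜ) : ∃ A : Set ℕ, OneGeneric A ∧ A ⊆ X ∧ A ∪ X = X :=
  oneGeneric_subset_of_compl_hyperimmune_general X hc
end

section
/- There is a non-computable set I ⊆ ℕ that is a subsequence set for weak-1-genericity: for every weak-1-generic G, the subsequence G_I is weak-1-generic. -/
/-!
Let `K` be a noncomputable set and let `I` contain, for each `n`, the element `2n + K(n)` of the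
pair `{2n, 2n+1}`. Then `K(n) = I(2n+1)`, so `I` is noncomputable, and `G_I(n) = G(2n + K(n))`.

Given a dense c.e. set `W`, consider the strings `ρ` such that every way of choosing one bit from
each pair of `ρ` yields a string meeting `W`. This set is c.e., as a bounded universal
quantification of a c.e. relation. It is dense: pad `ρ` to even length and append the doubling
`y₀y₀y₁y₁…` of a string `y` that extends each of the finitely many choices into `W`; every choice
then reads `y` off the doubled part. A weak-1-generic `G` has an initial segment in this set, and
the choice made by `K` on that segment is an initial segment of `G_I` meeting `W`.
-/

namespace Primrec

variable {α β : Type*} [Primcodable α] [Primcodable β]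

theorem list_any {f : α → List β} {p : α → β → Bool} (hf : Primrec f) (hp : Primrec₂ p) :
    Primrec fun a => (f a).any (p a) :=
  (list_foldr hf (const false)
    (Primrec.or.comp (hp.comp fst (fst.comp snd)) (snd.comp snd)).to₂).of_eq
    fun a => by induction f a <;> simp [*]

theorem list_all {f : α → List β} {p : α → β → Bool} (hf : Primrec f) (hp : Primrec₂ p) :
    Primrec fun a => (f a).all (p a) :=
  (list_foldr hf (const true)
    (Primrec.and.comp (hp.comp fst (fst.comp snd)) (snd.comp snd)).to₂).of_eq
    fun a => by induction f a <;> simp [*]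

end Primrec

theorem ComputablePred.comp {α β : Type*} [Primcodable α] [Primcodable β] {p : β → Prop}
    {f : α → β} (hp : ComputablePred p) (hf : Computable f) : ComputablePred fun a => p (f a) :=
  let ⟨_, hp⟩ := hp
  ⟨fun _ => inferInstance, hp.comp hf⟩

namespace REPred

variable {α β : Type*} [Primcodable α] [Primcodable β]

theorem comp {p : β → Prop} {f : α → β} (hp : REPred p) (hf : Computable f) :
    REPred fun a => p (f a) :=
  Partrec.comp hp hf

open Nat.Partrec.Code in
theorem exists_stage {p : α → Prop} (hp : REPred p) :
    ∃ q : α → ℕ → Bool, Primrec₂ q ∧ (∀ a, Monotone fun s => q a s = true) ∧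
      ∀ a, p a ↔ ∃ s, q a s = true := by
  obtain ⟨c, hc⟩ := exists_code.1 hp
  refine ⟨fun a s => (c.evaln s (Encodable.encode a)).isSome, ?_, ?_, fun a => ?_⟩
  · exact Primrec.option_isSome.comp <| primrec_evaln.comp <|
      (Primrec.snd.pair (Primrec.const c)).pair (Primrec.encode.comp Primrec.fst)
  · intro a s t hst
    simp only [Option.isSome_iff_exists]
    exact fun ⟨x, hx⟩ => ⟨x, evaln_mono hst hx⟩
  · have hdom : p a ↔ (c.eval (Encodable.encode a)).Dom := by
      simp only [hc, Encodable.encodek, Part.coe_some, Part.bind_some, Part.map_Dom]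
      exact ⟨fun h => ⟨h, trivial⟩, fun h => h.1⟩
    simp only [hdom, Part.dom_iff_mem, evaln_complete, Option.isSome_iff_exists]
    exact ⟨fun ⟨x, s, h⟩ => ⟨s, x, h⟩, fun ⟨s, x, h⟩ => ⟨x, s, h⟩⟩

theorem of_stage {p : α → Prop} {q : α → ℕ → Bool} (hq : Primrec₂ q)
    (hpq : ∀ a, p a ↔ ∃ s, q a s = true) : REPred p := by
  have hfind : Partrec fun a => Nat.rfind fun s => Part.some (q a s) :=
    Partrec.rfind hq.to_comp.partrec₂
  refine hfind.dom_re.of_eq fun a => Nat.rfind_dom.trans ?_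
  simp only [Part.mem_some_iff, Part.some_dom, implies_true, and_true, eq_comm, hpq]

theorem exists_mem_list {p : α → β → Prop} {L : α → List β} (hL : Primrec L)
    (hp : REPred fun x : α × β => p x.1 x.2) : REPred fun a => ∃ b ∈ L a, p a b := by
  obtain ⟨q, hq, -, hpq⟩ := hp.exists_stage
  refine of_stage (q := fun a s => (L a).any fun b => q (a, b) s)
    (Primrec.list_any (hL.comp Primrec.fst) (hq.comp (Primrec.pair (Primrec.fst.comp Primrec.fst)
      Primrec.snd) (Primrec.snd.comp Primrec.fst))) fun a => ?_
  simp only [List.any_eq_true, fun b => hpq (a, b)]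
  exact ⟨fun ⟨b, hb, s, hs⟩ => ⟨s, b, hb, hs⟩, fun ⟨s, b, hb, hs⟩ => ⟨b, hb, s, hs⟩⟩

theorem forall_mem_list {p : α → β → Prop} {L : α → List β} (hL : Primrec L)
    (hp : REPred fun x : α × β => p x.1 x.2) : REPred fun a => ∀ b ∈ L a, p a b := by
  obtain ⟨q, hq, hmono, hpq⟩ := hp.exists_stage
  refine of_stage (q := fun a s => (L a).all fun b => q (a, b) s)
    (Primrec.list_all (hL.comp Primrec.fst) (hq.comp (Primrec.pair (Primrec.fst.comp Primrec.fst)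
      Primrec.snd) (Primrec.snd.comp Primrec.fst))) fun a => ?_
  -- the stage predicates are upward closed, so finitely many of them hold at a common stage
  have heventually : ∀ b, p a b ↔ ∀ᶠ s in Filter.atTop, q (a, b) s = true := fun b => by
    rw [hpq (a, b), Filter.eventually_atTop]
    exact ⟨fun ⟨s, hs⟩ => ⟨s, fun t hst => hmono _ hst hs⟩, fun ⟨s, hs⟩ => ⟨s, hs s le_rfl⟩⟩
  simp only [List.all_eq_true, heventually]
  have hfin := Filter.eventually_all_finite (List.finite_toSet (L a)) (l := Filter.atTop)
    (p := fun b s => q (a, b) s = true)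
  simp only [Set.mem_ofPred_eq] at hfin
  rw [← hfin, Filter.eventually_atTop]
  exact ⟨fun ⟨s, hs⟩ => ⟨s, hs s le_rfl⟩,
    fun ⟨s, hs⟩ => ⟨s, fun t hst b hb => hmono _ hst (hs b hb)⟩⟩

end REPred

def binaryStrings (k : ℕ) : List (List Bool) :=
  Nat.rec [[]] (fun _ prev => prev.flatMap fun x => [false :: x, true :: x]) k

@[simp] theorem mem_binaryStrings {k : ℕ} {x : List Bool} :
    x ∈ binaryStrings k ↔ x.length = k := by
  induction k generalizing x with
  | zero => simp [binaryStrings]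
  | succ k ih =>
    change x ∈ (binaryStrings k).flatMap _ ↔ _
    cases x with
    | nil => simp
    | cons b t => cases b <;> simp [ih]

theorem primrec_binaryStrings : Primrec binaryStrings :=
  Primrec.nat_rec₁ _ <| Primrec.list_flatMap Primrec.snd <| Primrec.to₂ <|
    Primrec.list_cons.comp (Primrec.list_cons.comp (Primrec.const false) Primrec.snd) <|
      Primrec.list_cons.comp (Primrec.list_cons.comp (Primrec.const true) Primrec.snd) <|
        Primrec.const []

theorem meetsStr_iff_exists_take {ρ : List Bool} {S : Set (List Bool)} :
    MeetsStr ρ S ↔ ∃ m ∈ List.range (ρ.length + 1), ρ.take m ∈ S := by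
  simp only [MeetsStr, List.mem_range, Nat.lt_succ_iff]
  constructor
  · rintro ⟨σ, hσ, hpre⟩
    exact ⟨σ.length, hpre.length_le, List.prefix_iff_eq_take.1 hpre ▸ hσ⟩
  · rintro ⟨m, -, hm⟩
    exact ⟨ρ.take m, hm, List.take_prefix m ρ⟩

theorem REPred.meetsStr {S : Set (List Bool)} (hS : REPred (· ∈ S)) :
    REPred fun ρ => MeetsStr ρ S :=
  (REPred.exists_mem_list (Primrec.list_range.comp (Primrec.succ.comp Primrec.list_length))
    (hS.comp (Primrec.list_take.comp Primrec.snd Primrec.fst).to_comp)).of_eq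
    fun _ => meetsStr_iff_exists_take.symm

theorem MeetsStr.mono {ρ ρ' : List Bool} {S : Set (List Bool)} (h : MeetsStr ρ S)
    (hρ : ρ <+: ρ') : MeetsStr ρ' S :=
  let ⟨σ, hσ, hpre⟩ := h
  ⟨σ, hσ, hpre.trans hρ⟩

theorem DenseStrings.exists_append_meetsStr {W : Set (List Bool)} (hW : DenseStrings W)
    (L : List (List Bool)) : ∃ y, ∀ x ∈ L, MeetsStr (x ++ y) W := by
  induction L with
  | nil => exact ⟨[], by simp⟩
  | cons x L ih =>
    obtain ⟨y, hy⟩ := ih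
    obtain ⟨w, hw, d, rfl⟩ := hW (x ++ y)
    refine ⟨y ++ d, fun x' hx' => ?_⟩
    rcases List.mem_cons.1 hx' with rfl | hx'
    · exact ⟨_, hw, by simp⟩
    · exact (hy x' hx').mono ⟨d, by simp⟩

theorem MeetsStr.exists_seg {G : Set ℕ} {S : Set (List Bool)} {n : ℕ}
    (h : MeetsStr (seg G n) S) : ∃ k, seg G k ∈ S := by
  obtain ⟨σ, hσ, hpre⟩ := h
  refine ⟨σ.length, ?_⟩
  have hle : σ.length ≤ n := by simpa [seg] using hpre.length_le
  rwa [List.prefix_iff_eq_take.1 hpre, seg, ← List.map_take, List.take_range, min_eq_left hle]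
    at hσ

noncomputable def pairSel (K : Set ℕ) (n : ℕ) : ℕ := 2 * n + (chi K n).toNat

def pickFromPairs (ρ c : List Bool) : List Bool :=
  (List.range c.length).map fun i => ρ.getD (2 * i + (c.getD i false).toNat) false

def doubleBits (y : List Bool) : List Bool :=
  (List.range (2 * y.length)).map fun i => y.getD (i / 2) false

theorem primrec_pickFromPairs : Primrec₂ pickFromPairs := by
  have htoNat : Primrec Bool.toNat :=
    (Primrec.cond Primrec.id (Primrec.const 1) (Primrec.const 0)).of_eq fun b => by cases b <;> rfl
  refine Primrec.list_map (Primrec.list_range.comp (Primrec.list_length.comp Primrec.snd)) ?_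
  exact (Primrec.list_getD false).comp (Primrec.fst.comp Primrec.fst) <|
    Primrec.nat_add.comp (Primrec.nat_double.comp Primrec.snd) <|
      htoNat.comp <| (Primrec.list_getD false).comp (Primrec.snd.comp Primrec.fst) Primrec.snd

@[simp] theorem length_pickFromPairs (ρ c : List Bool) :
    (pickFromPairs ρ c).length = c.length := by
  simp [pickFromPairs]

@[simp] theorem length_doubleBits (y : List Bool) : (doubleBits y).length = 2 * y.length := by
  simp [doubleBits]

theorem getElem_pickFromPairs (ρ c : List Bool) {i : ℕ} (hi : i < (pickFromPairs ρ c).length) :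
    (pickFromPairs ρ c)[i] = ρ.getD (2 * i + (c.getD i false).toNat) false := by
  simp [pickFromPairs]

theorem length_seg (G : Set ℕ) (n : ℕ) : (seg G n).length = n := by
  simp [seg]

theorem getD_seg (G : Set ℕ) {n i : ℕ} (hi : i < n) : (seg G n).getD i false = chi G i := by
  simp [seg, hi]

theorem getD_doubleBits (y : List Bool) (i : ℕ) :
    (doubleBits y).getD i false = y.getD (i / 2) false := by
  by_cases hi : i < 2 * y.length
  · simp [doubleBits, hi]
  · rw [List.getD_eq_default _ _ (by simp [doubleBits]; omega),
      List.getD_eq_default _ _ (by omega)]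

theorem pickFromPairs_seg (G K : Set ℕ) {n m : ℕ} (h : 2 * n ≤ m) :
    pickFromPairs (seg G m) (seg K n) = seg {i | pairSel K i ∈ G} n := by
  refine List.ext_getElem (by simp [length_seg]) fun i hi _ => ?_
  have hin : i < n := by simpa [length_seg] using hi
  have hb := Bool.toNat_le (chi K i)
  rw [getElem_pickFromPairs, getD_seg _ hin, getD_seg _ (by omega),
    ← List.getD_eq_getElem _ false, getD_seg _ hin]
  rfl

theorem pickFromPairs_append_doubleBits {σ c y : List Bool} {k : ℕ} (hσ : σ.length = 2 * k)
    (hc : c.length = k + y.length) :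
    pickFromPairs (σ ++ doubleBits y) c = pickFromPairs σ (c.take k) ++ y := by
  refine List.ext_getElem (by simp [hc]) fun i hi _ => ?_
  have hb := Bool.toNat_le (c.getD i false)
  rw [getElem_pickFromPairs]
  by_cases hik : i < k
  · rw [List.getElem_append_left (by simp; omega), getElem_pickFromPairs,
      List.getD_append _ _ _ _ (by omega)]
    simp [hik]
  · rw [List.getElem_append_right (by simp; omega), List.getD_append_right _ _ _ _ (by omega),
      getD_doubleBits, ← List.getD_eq_getElem _ false]
    simp only [length_pickFromPairs, List.length_take, hσ]
    congr 1
    omega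

def allPicksMeet (W : Set (List Bool)) : Set (List Bool) :=
  {ρ | ∀ c ∈ binaryStrings (ρ.length / 2), MeetsStr (pickFromPairs ρ c) W}

theorem REPred.allPicksMeet {W : Set (List Bool)} (hW : REPred (· ∈ W)) :
    REPred (· ∈ allPicksMeet W) :=
  REPred.forall_mem_list
    (primrec_binaryStrings.comp (Primrec.nat_div.comp Primrec.list_length (Primrec.const 2)))
    (hW.meetsStr.comp primrec_pickFromPairs.to_comp)

theorem DenseStrings.allPicksMeet {W : Set (List Bool)} (hW : DenseStrings W) :
    DenseStrings (allPicksMeet W) := by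
  intro σ
  obtain ⟨y, hy⟩ :=
    hW.exists_append_meetsStr ((binaryStrings σ.length).map (pickFromPairs (σ ++ σ)))
  refine ⟨σ ++ σ ++ doubleBits y, fun c hc => ?_, ⟨σ ++ doubleBits y, by simp⟩⟩
  have hlen : (σ ++ σ).length = 2 * σ.length := by simp; omega
  have hc : c.length = σ.length + y.length := by
    simp only [mem_binaryStrings, List.length_append, length_doubleBits] at hc
    omega
  rw [pickFromPairs_append_doubleBits hlen hc]
  exact hy _ (List.mem_map.2 ⟨c.take σ.length, by simp [hc], rfl⟩)

theorem WeakOneGeneric.pairSel {G : Set ℕ} (hG : WeakOneGeneric G) (K : Set ℕ) :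
    WeakOneGeneric {i | pairSel K i ∈ G} := by
  intro W hW hdense
  obtain ⟨m, hm⟩ := hG _ hW.allPicksMeet hdense.allPicksMeet
  have hmeet := hm (seg K (m / 2)) (by simp [length_seg])
  rw [pickFromPairs_seg G K (by omega)] at hmeet
  exact hmeet.exists_seg

theorem exists_not_computableSet : ∃ K : Set ℕ, ¬ComputableSet K :=
  ⟨{n | ((Denumerable.ofNat Nat.Partrec.Code n).eval 0).Dom}, fun h =>
    ComputablePred.halting_problem 0 <| (h.comp Computable.encode).of_eq fun c => by simp⟩

theorem strictMono_pairSel (K : Set ℕ) : StrictMono (pairSel K) :=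
  strictMono_nat_of_lt_succ fun n => by
    have := Bool.toNat_le (chi K n)
    simp only [pairSel]
    omega

theorem princ_range {f : ℕ → ℕ} (hf : StrictMono f) : princ (Set.range f) = f := by
  funext n
  have hinf : ¬(Set.range f).Finite := Set.infinite_range_of_injective hf.injective
  have := Nat.nth_comp_of_strictMono (p := (· ∈ Set.range f)) (n := n) hf (fun _ => id)
    (fun hfin => absurd hfin hinf)
  simpa [princ] using this.symm

theorem odd_mem_range_pairSel {K : Set ℕ} {n : ℕ} :
    2 * n + 1 ∈ Set.range (pairSel K) ↔ n ∈ K := by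
  have hchi : n ∈ K ↔ (chi K n).toNat = 1 := by simp [chi]
  simp only [Set.mem_range, pairSel, hchi]
  constructor
  · rintro ⟨m, hm⟩
    obtain rfl : m = n := by have := Bool.toNat_le (chi K m); omega
    omega
  · exact fun hn => ⟨n, by omega⟩

theorem ComputableSet.of_range_pairSel {K : Set ℕ}
    (h : ComputableSet (Set.range (pairSel K))) : ComputableSet K :=
  (h.comp (Primrec.nat_double_succ.to_comp)).of_eq fun _ => odd_mem_range_pairSel

theorem exists_noncomputable_subsequenceSet_for_weakOneGenericity :
    ∃ I : Set ℕ, ¬ ComputableSet I ∧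
      ∀ G : Set ℕ, WeakOneGeneric G → WeakOneGeneric (subseq G I) := by
  obtain ⟨K, hK⟩ := exists_not_computableSet
  refine ⟨Set.range (pairSel K), fun h => hK h.of_range_pairSel, fun G hG => ?_⟩
  rw [subseq, princ_range (strictMono_pairSel K)]
  exact hG.pairSel K
end

section
/- There are continuum many sets I ⊆ ℕ satisfying: for every i, for all but finitely many n, the interval [l_i(2n), l_i(2n+2)) contains at most one element of the complement of I, where (l_i)_{i∈ω} is a fixed countable family of strictly increasing functions; consequently, one such I is non-computable. -/
/-! Choose one strictly increasing sequence `s` so sparse that `s (j + 1)` exceeds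
`l i (s j + 2)` for all `i ≤ j`. Once `l i (2 * n)` passes `s i`, a point `s j` of the
interval `[l i (2 * n), l i (2 * n + 2))` has `j > i`, and then the next point
`s (j + 1)` already lies beyond the interval. Hence every `I` whose complement is a
subset of the range of `s` qualifies, which gives `2 ^ ℵ₀` sets; only countably many
sets are computable. -/

open Set Filter Cardinal

def dominatingSeq (f : ℕ → ℕ → ℕ) : ℕ → ℕ
  | 0 => 0
  | k + 1 => dominatingSeq f k + 1 + ∑ i ∈ Finset.range (k + 1), f i (dominatingSeq f k)

theorem dominatingSeq_strictMono (f : ℕ → ℕ → ℕ) : StrictMono (dominatingSeq f) :=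
  strictMono_nat_of_lt_succ fun k => by simp only [dominatingSeq]; omega

theorem apply_dominatingSeq_lt_succ (f : ℕ → ℕ → ℕ) {i k : ℕ} (hik : i ≤ k) :
    f i (dominatingSeq f k) < dominatingSeq f (k + 1) := by
  have : f i (dominatingSeq f k) ≤ ∑ j ∈ Finset.range (k + 1), f j (dominatingSeq f k) :=
    Finset.single_le_sum (f := fun j => f j (dominatingSeq f k)) (fun _ _ => Nat.zero_le _)
      (Finset.mem_range.mpr (by omega))
  simp only [dominatingSeq]
  omega

theorem Set.subsingleton_Ico_inter_range {α : Type*} [Preorder α] {s : ℕ → α}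
    (hs : Monotone s) {a b : α} (h : ∀ j, a ≤ s j → b ≤ s (j + 1)) :
    (Ico a b ∩ range s).Subsingleton := by
  have key : ∀ j j', j < j' → s j ∈ Ico a b → s j' ∉ Ico a b := fun j j' hjj' hj hj' =>
    (h j hj.1).trans (hs hjj') |>.not_gt hj'.2
  rintro _ ⟨hx, j, rfl⟩ _ ⟨hy, j', rfl⟩
  rcases lt_trichotomy j j' with hlt | rfl | hgt
  · exact absurd hy (key j j' hlt hx)
  · rfl
  · exact absurd hx (key j' j hgt hy)

theorem eventually_subsingleton_Ico_inter_range_dominatingSeq {l : ℕ → ℕ → ℕ}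
    (hl : ∀ i, StrictMono (l i)) (i : ℕ) :
    ∀ᶠ n in atTop, (Ico (l i (2 * n)) (l i (2 * n + 2)) ∩
      range (dominatingSeq fun i m => l i (m + 2))).Subsingleton := by
  have hs := dominatingSeq_strictMono fun i m => l i (m + 2)
  set s := dominatingSeq fun i m => l i (m + 2)
  filter_upwards [eventually_gt_atTop (s i)] with n hn
  refine subsingleton_Ico_inter_range hs.monotone fun j hj => ?_
  have h2n : 2 * n ≤ l i (2 * n) := (hl i).le_apply
  have hij : i < j := hs.lt_iff_lt.mp (by omega)
  calc l i (2 * n + 2) ≤ l i (s j + 2) := (hl i).monotone (by omega)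
    _ ≤ s (j + 1) := (apply_dominatingSeq_lt_succ (fun i m => l i (m + 2)) hij.le).le

def SparseComplement (l : ℕ → ℕ → ℕ) (I : Set ℕ) : Prop :=
  ∀ i, ∀ᶠ n in atTop, (Ico (l i (2 * n)) (l i (2 * n + 2)) ∩ Iᶜ).ncard ≤ 1

theorem sparseComplement_of_compl_subset {l : ℕ → ℕ → ℕ} (hl : ∀ i, StrictMono (l i))
    {I : Set ℕ} (hI : Iᶜ ⊆ range (dominatingSeq fun i m => l i (m + 2))) :
    SparseComplement l I := fun i =>
  (eventually_subsingleton_Ico_inter_range_dominatingSeq hl i).mono fun _ hn =>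
    ncard_le_one_iff_subsingleton.mpr (hn.anti (inter_subset_inter_right _ hI))

theorem mk_setOf_sparseComplement {l : ℕ → ℕ → ℕ} (hl : ∀ i, StrictMono (l i)) :
    #{I | SparseComplement l I} = 𝔠 := by
  set s := dominatingSeq fun i m => l i (m + 2)
  have hinj : Function.Injective fun A : Set ℕ =>
      (⟨(s '' A)ᶜ, sparseComplement_of_compl_subset hl
        (by rw [compl_compl]; exact image_subset_range _ _)⟩ : {I | SparseComplement l I}) :=
    fun A B hAB => (image_injective.mpr (dominatingSeq_strictMono _).injective)
      (compl_injective (congrArg Subtype.val hAB))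
  refine le_antisymm ?_ ?_
  · exact (mk_set_le _).trans mk_set_nat.le
  · exact mk_set_nat.symm.le.trans (mk_le_of_injective hinj)

theorem countable_setOf_computableSet : {I : Set ℕ | ComputableSet I}.Countable := by
  refine (countable_range fun f : {f : ℕ → ℕ // Computable f} => {n | f.1 n = 1}).mono ?_
  intro I hI
  obtain ⟨f, hf, hI⟩ := ComputablePred.computable_iff.mp hI
  refine ⟨⟨fun n => Encodable.encode (f n), Computable.encode.comp hf⟩, ?_⟩
  ext n
  show Encodable.encode (f n) = 1 ↔ n ∈ I
  rw [show n ∈ I ↔ f n = true from iff_of_eq (congrFun hI n)]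
  cases f n <;> decide

theorem exists_mem_not_computableSet {S : Set (Set ℕ)} (hS : ¬S.Countable) :
    ∃ I ∈ S, ¬ComputableSet I := by
  by_contra! h
  exact hS (countable_setOf_computableSet.mono h)

theorem continuum_many_sparse_complement_sets (l : ℕ → ℕ → ℕ)
    (hl : ∀ i, StrictMono (l i)) :
    Cardinal.mk {I : Set ℕ | ∀ i, ∀ᶠ n in Filter.atTop,
        (Set.Ico (l i (2 * n)) (l i (2 * n + 2)) ∩ Iᶜ).ncard ≤ 1} =
      Cardinal.continuum ∧
    ∃ I : Set ℕ, (∀ i, ∀ᶠ n in Filter.atTop,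
        (Set.Ico (l i (2 * n)) (l i (2 * n + 2)) ∩ Iᶜ).ncard ≤ 1) ∧
      ¬ ComputableSet I := by
  have hcard : #{I | SparseComplement l I} = 𝔠 := mk_setOf_sparseComplement hl
  have hunc : ¬{I | SparseComplement l I}.Countable := fun h =>
    (le_aleph0_iff_set_countable.mpr h).not_gt (hcard ▸ aleph0_lt_continuum)
  exact ⟨hcard, exists_mem_not_computableSet hunc⟩
end

section
/- For any set I ⊆ ℕ containing at least one element in every interval (f(n), f(n+1)) for a strictly increasing f, and for any string σ of length f(m) and any i ∈ {0,1}, the I-subsequence of σ⌢i^{f(m+1)-f(m)} equals σ_I followed by a nonempty block of i's. -/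
/-! The `I`-subsequence of `σ ++ τ` is that of `σ` followed by the subsequence of `τ` along `I`
shifted down by `|σ|`. For a constant block `τ` the latter is again constant, and a point of `I`
in `(f m, f (m + 1))` makes it nonempty. -/

section

variable {τ : List Bool} {J : Set ℕ}

theorem mem_of_mem_subseqStr {b : Bool} (hb : b ∈ subseqStr τ J) : b ∈ τ := by
  obtain ⟨k, -, hk⟩ := List.mem_filterMap.mp hb
  split_ifs at hk
  exact List.mem_of_getElem? hk

theorem subseqStr_ne_nil_of_mem {j : ℕ} (hjJ : j ∈ J) (hjτ : j < τ.length) :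
    subseqStr τ J ≠ [] := by
  rw [subseqStr, Ne, List.filterMap_eq_nil_iff, not_forall]
  exact ⟨j, fun h => by simp [hjJ, hjτ] at h⟩

end

theorem subseqStr_append (σ τ : List Bool) (I : Set ℕ) :
    subseqStr (σ ++ τ) I = subseqStr σ I ++ subseqStr τ ((σ.length + ·) ⁻¹' I) := by
  rw [subseqStr, List.length_append, List.range_add, List.filterMap_append, List.filterMap_map]
  congr 1
  · refine List.filterMap_congr fun k hk => ?_
    rw [List.getElem?_append_left (List.mem_range.mp hk)]
  · refine List.filterMap_congr fun k _ => ?_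
    rw [Function.comp_apply, List.getElem?_append_right (Nat.le_add_right _ _),
      Nat.add_sub_cancel_left]
    rfl

theorem subseqStr_replicate (n : ℕ) (i : Bool) (J : Set ℕ) :
    subseqStr (List.replicate n i) J =
      List.replicate (subseqStr (List.replicate n i) J).length i :=
  List.eq_replicate_iff.mpr ⟨rfl, fun _ hb => List.eq_of_mem_replicate (mem_of_mem_subseqStr hb)⟩

theorem subseqStr_append_block_general (f : ℕ → ℕ) (I : Set ℕ)
    (hI : ∀ n, (I ∩ Set.Ioo (f n) (f (n + 1))).Nonempty)
    (σ : List Bool) (m : ℕ) (hσ : σ.length = f m) (i : Bool) :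
    ∃ k ≥ 1, subseqStr (σ ++ List.replicate (f (m + 1) - f m) i) I =
      subseqStr σ I ++ List.replicate k i := by
  set block := List.replicate (f (m + 1) - f m) i
  obtain ⟨x, hxI, hmx, hxm⟩ := hI m
  have hne : subseqStr block ((σ.length + ·) ⁻¹' I) ≠ [] :=
    subseqStr_ne_nil_of_mem (j := x - f m) (by simp [hσ, Nat.add_sub_cancel' hmx.le, hxI])
      (by simp only [block, List.length_replicate]; omega)
  refine ⟨_, List.length_pos_iff.mpr hne, ?_⟩
  rw [subseqStr_append, ← subseqStr_replicate]

theorem subseqStr_append_block (f : ℕ → ℕ) (hf : StrictMono f) (I : Set ℕ)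
    (hI : ∀ n, (I ∩ Set.Ioo (f n) (f (n + 1))).Nonempty)
    (σ : List Bool) (m : ℕ) (hσ : σ.length = f m) (i : Bool) :
    ∃ k ≥ 1, subseqStr (σ ++ List.replicate (f (m + 1) - f m) i) I =
      subseqStr σ I ++ List.replicate k i :=
  subseqStr_append_block_general f I hI σ m hσ i
end
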